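/- There exists a constant C > 0 such that for every real L ≥ 1 and every integer α ≥ 1, α! Γ(L)/Γ(L+α) ≤ C · α · (α/(L+α))^α · (L/(L+α))^L. -/

import Mathlib

/-! The quotient `R(α) = α! Γ(L) / Γ(L + α)` satisfies `R(α + 1) = (α + 1) / (L + α) · R(α)`, and
the right-hand side equals `4 L^L · α^(α+1) / (L + α)^(L + α)`. Comparing the two recursions,
`R(α) (L + α)^(L + α) / α^(α+1)` decreases in `α` because `(1 + 1/x)^(x+1)` decreases in `x` and
`α ≤ L + α`. At `α = 1` this quotient is `(L + 1)^(L + 1) / L`, which is at most `4 L^L` by the same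
monotonicity between `1` and `L`. -/

open Real Set

-- `x ↦ log ((1 + 1/x)^(x+1))`
lemma antitoneOn_add_one_mul_log_add_one_sub_log :
    AntitoneOn (fun x : ℝ => (x + 1) * (log (x + 1) - log x)) (Ioi 0) := by
  have hderiv : ∀ x ∈ Ioi (0 : ℝ), HasDerivAt (fun x : ℝ => (x + 1) * (log (x + 1) - log x))
      (log (x + 1) - log x - 1 / x) x := by
    intro x (hx : 0 < x)
    have hlog₁ := ((hasDerivAt_id' x).add_const 1).log (by linarith)
    refine (((hasDerivAt_id' x).add_const 1).mul (hlog₁.sub (hasDerivAt_log hx.ne'))).congr_deriv ?_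
    simp only [Pi.sub_apply]
    field_simp
    ring
  refine antitoneOn_of_hasDerivWithinAt_nonpos (convex_Ioi 0)
    (fun x hx => (hderiv x hx).continuousAt.continuousWithinAt)
    (fun x hx => (hderiv x (interior_subset hx)).hasDerivWithinAt) fun x hx => ?_
  rw [interior_Ioi] at hx
  have hx : 0 < x := hx
  have : log (x + 1) - log x ≤ 1 / x := by
    rw [← log_div (by linarith) hx.ne']
    calc log ((x + 1) / x) ≤ (x + 1) / x - 1 := log_le_sub_one_of_pos (by positivity)
      _ = 1 / x := by field_simp; ring
  linarith

lemma rpow_self_add_one_div_le_of_le {a b : ℝ} (ha : 0 < a) (hab : a ≤ b) :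
    a ^ (a + 1) / b ^ (b + 1) ≤ (a + 1) ^ (a + 1) / (b + 1) ^ (b + 1) := by
  have hb : 0 < b := ha.trans_le hab
  have h := antitoneOn_add_one_mul_log_add_one_sub_log (mem_Ioi.2 ha) (mem_Ioi.2 hb) hab
  rw [← log_le_log_iff (by positivity) (by positivity), log_div (by positivity) (by positivity),
    log_div (by positivity) (by positivity), log_rpow ha, log_rpow hb, log_rpow (by linarith),
    log_rpow (by linarith)]
  linarith

lemma mul_div_add_rpow_mul_div_add_rpow {x y : ℝ} (hx : 0 < x) (hy : 0 < y) :
    x * (x / (x + y)) ^ x * (y / (x + y)) ^ y = x ^ (x + 1) * y ^ y / (x + y) ^ (x + y) := by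
  rw [div_rpow hx.le (by positivity), div_rpow hy.le (by positivity), rpow_add_one hx.ne',
    rpow_add (by positivity)]
  field_simp

lemma factorial_mul_Gamma_div_Gamma_add_le {L : ℝ} (hL : 0 < L) {α : ℕ} (hα : 1 ≤ α) :
    (α.factorial : ℝ) * Gamma L / Gamma (L + α) ≤
      (L + 1) ^ (L + 1) / L * ((α : ℝ) ^ ((α : ℝ) + 1) / (L + α) ^ (L + α)) := by
  induction α, hα using Nat.le_induction with
  | base =>
    refine le_of_eq ?_
    simp only [Nat.factorial_one, Nat.cast_one, one_rpow, Gamma_add_one hL.ne']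
    field_simp
  | succ n hn ih =>
    set s := L + n
    have hn0 : (0 : ℝ) < n := by exact_mod_cast hn
    have hs0 : 0 < s := by positivity
    have hΓ : Gamma (L + ↑(n + 1)) = s * Gamma s := by
      rw [Nat.cast_succ, ← add_assoc, Gamma_add_one hs0.ne']
    have hstep := rpow_self_add_one_div_le_of_le hn0 (show (n : ℝ) ≤ s by linarith)
    calc ((n + 1).factorial : ℝ) * Gamma L / Gamma (L + ↑(n + 1))
        = (n + 1) / s * ((n.factorial : ℝ) * Gamma L / Gamma s) := by
          rw [hΓ, Nat.factorial_succ]; push_cast; field_simp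
      _ ≤ (n + 1) / s * ((L + 1) ^ (L + 1) / L * ((n : ℝ) ^ ((n : ℝ) + 1) / s ^ s)) := by
          gcongr
      _ = (L + 1) ^ (L + 1) / L * (n + 1) * ((n : ℝ) ^ ((n : ℝ) + 1) / s ^ (s + 1)) := by
          rw [rpow_add_one hs0.ne']; field_simp
      _ ≤ (L + 1) ^ (L + 1) / L * (n + 1) * ((n + 1) ^ ((n : ℝ) + 1) / (s + 1) ^ (s + 1)) := by
          gcongr
      _ = (L + 1) ^ (L + 1) / L *
            ((↑(n + 1) : ℝ) ^ ((↑(n + 1) : ℝ) + 1) / (L + ↑(n + 1)) ^ (L + ↑(n + 1))) := by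
          rw [Nat.cast_succ, rpow_add_one (x := (n : ℝ) + 1) (by positivity) ((n : ℝ) + 1),
            show L + (n + 1 : ℝ) = s + 1 by ring]
          ring

/-- Stirling-type bound for the ratio `α! Γ(L) / Γ(L+α)`. -/
theorem factorial_gamma_ratio_bound :
    ∃ C > 0, ∀ L : ℝ, 1 ≤ L → ∀ α : ℕ, 1 ≤ α →
      (α.factorial : ℝ) * Real.Gamma L / Real.Gamma (L + α) ≤
        C * α * ((α / (L + α)) ^ α) * (L / (L + α)) ^ L := by
  refine ⟨4, by norm_num, fun L hL α hα => ?_⟩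
  have hL0 : 0 < L := by linarith
  have hα0 : (0 : ℝ) < α := by exact_mod_cast hα
  have hconst : (L + 1) ^ (L + 1) / L ≤ 4 * L ^ L := by
    have h := rpow_self_add_one_div_le_of_le one_pos hL
    rw [div_le_div_iff₀ (by positivity) (by positivity)] at h
    norm_num at h
    rwa [div_le_iff₀ hL0, mul_assoc, ← rpow_add_one hL0.ne']
  calc (α.factorial : ℝ) * Gamma L / Gamma (L + α)
      ≤ (L + 1) ^ (L + 1) / L * ((α : ℝ) ^ ((α : ℝ) + 1) / (L + α) ^ (L + α)) :=
        factorial_mul_Gamma_div_Gamma_add_le hL0 hα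
    _ ≤ 4 * L ^ L * ((α : ℝ) ^ ((α : ℝ) + 1) / (L + α) ^ (L + α)) := by gcongr
    _ = 4 * α * ((α / (L + α)) ^ α) * (L / (L + α)) ^ L := by
        rw [← rpow_natCast, add_comm L (α : ℝ)]
        linear_combination (-4) * mul_div_add_rpow_mul_div_add_rpow hα0 hL0
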